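/- On the restricted parameter space Θ* = {(θ,γ): θ∈{0,1}, γᵢ ≥ 1/2+ε for all i} with ε ∈ (0,1/2) and n odd, the majority rule δ_M(y)=1{ȳ>1/2} is minimax: sup_{ξ∈Θ*} R(δ_M,ξ) = inf_δ sup_{ξ∈Θ*} R(δ,ξ), and this common value equals P(Bin(n, 1/2−ε) > n/2). -/

import Mathlib

open scoped BigOperators Classical

/-- `P(Y = y ∣ θ, γ)`: given `(θ,γ)` the `Yᵢ` are independent with
`P(Yᵢ = θ ∣ θ, γᵢ) = γᵢ`. -/
noncomputable def crowdProb (n : ℕ) (θ : Bool) (γ : Fin n → ℝ) (y : Fin n → Bool) : ℝ :=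
  ∏ i, if y i = θ then γ i else 1 - γ i

/-- The risk `R(δ,(θ,γ)) = P(δ(Y,U) ≠ θ ∣ θ, γ)` of a decision rule using an
independent fair coin `U`. -/
noncomputable def crowdRisk (n : ℕ) (δ : (Fin n → Bool) → Bool → Bool)
    (θ : Bool) (γ : Fin n → ℝ) : ℝ :=
  ∑ y : Fin n → Bool, ∑ u : Bool,
    crowdProb n θ γ y * (1 / 2) * (if δ y u = θ then 0 else 1)

/-- The majority rule `δ_M(y) = 1{ȳ > 1/2}` (it ignores the coin). -/
noncomputable def majorityRule (n : ℕ) : (Fin n → Bool) → Bool → Bool :=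
  fun y _ => if (n : ℝ) / 2 < ∑ i, (if y i then (1 : ℝ) else 0) then true else false

/-!
Flipping the votes that disagree with `θ` turns the risk of the majority rule at `(θ, γ)` into
the probability that most of `n` independent votes, the `i`-th one correct with probability `γᵢ`,
are wrong (`n` is odd, so there are no ties). This error event is decreasing in the votes, so
its probability is decreasing in every `γᵢ` and on `Θ*` is largest at `γᵢ ≡ 1/2 + ε`, where it
is the binomial tail. At that `γ` the majority rule always picks the likelier state, so it is
Bayes for the uniform prior on `θ`: every rule has average risk over the two states, hence
worst-case risk, at least that tail.
-/

open Finset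

section CrowdProb

variable {n : ℕ}

lemma crowdProb_nonneg {θ : Bool} {γ : Fin n → ℝ} (h0 : 0 ≤ γ) (h1 : γ ≤ 1)
    (y : Fin n → Bool) : 0 ≤ crowdProb n θ γ y :=
  prod_nonneg fun i _ => by
    split_ifs <;> linarith [show 0 ≤ γ i from h0 i, show γ i ≤ 1 from h1 i]

lemma sum_crowdProb (θ : Bool) (γ : Fin n → ℝ) : ∑ y, crowdProb n θ γ y = 1 := by
  simp only [crowdProb]
  rw [← Fintype.prod_sum fun i (b : Bool) => if b = θ then γ i else 1 - γ i]
  refine prod_eq_one fun i _ => ?_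
  cases θ <;> simp

lemma crowdRisk_le_one (δ : (Fin n → Bool) → Bool → Bool) {θ : Bool} {γ : Fin n → ℝ}
    (h0 : 0 ≤ γ) (h1 : γ ≤ 1) : crowdRisk n δ θ γ ≤ 1 := by
  calc crowdRisk n δ θ γ ≤ ∑ y, ∑ _u : Bool, crowdProb n θ γ y * (1 / 2) := by
        refine sum_le_sum fun y _ => sum_le_sum fun u _ => ?_
        have := crowdProb_nonneg (θ := θ) h0 h1 y
        split_ifs <;> linarith
    _ = ∑ y, crowdProb n θ γ y := sum_congr rfl fun y _ => by rw [Fintype.sum_bool]; ring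
    _ = 1 := sum_crowdProb θ γ

lemma crowdRisk_le_iSup_iSup {P : (Fin n → ℝ) → Prop} (hP : ∀ g, P g → 0 ≤ g ∧ g ≤ 1)
    (δ : (Fin n → Bool) → Bool → Bool) (θ : Bool) (γ : {g // P g}) :
    crowdRisk n δ θ γ.1 ≤ ⨆ θ, ⨆ γ : {g // P g}, crowdRisk n δ θ γ.1 :=
  le_ciSup_of_le (Set.finite_range _).bddAbove θ <| le_ciSup
    ⟨1, Set.forall_mem_range.2 fun γ => crowdRisk_le_one δ (hP _ γ.2).1 (hP _ γ.2).2⟩ γ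

lemma crowdProb_const (θ : Bool) (p : ℝ) (y : Fin n → Bool) :
    crowdProb n θ (fun _ => p) y = p ^ #{i | y i = θ} * (1 - p) ^ #{i | y i = !θ} := by
  rw [crowdProb, prod_ite, prod_const, prod_const]
  congr 3
  ext i
  cases θ <;> simp

lemma sum_crowdProb_succ (γ : Fin (n + 1) → ℝ) (f : (Fin (n + 1) → Bool) → ℝ) :
    ∑ y, crowdProb (n + 1) true γ y * f y =
      γ 0 * ∑ y, crowdProb n true (Fin.tail γ) y * f (Fin.cons true y) +
        (1 - γ 0) * ∑ y, crowdProb n true (Fin.tail γ) y * f (Fin.cons false y) := by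
  have sum_cons (F : (Fin (n + 1) → Bool) → ℝ) :
      ∑ y, F y = ∑ b, ∑ y, F (Fin.cons b y) :=
    ((Fin.consEquiv fun _ => Bool).sum_comp F).symm.trans (Fintype.sum_prod_type _)
  rw [sum_cons, Fintype.sum_bool, mul_sum, mul_sum]
  congr 1 <;> refine sum_congr rfl fun y _ => ?_ <;>
    simp only [crowdProb, Fin.prod_univ_succ, Fin.cons_zero, Fin.cons_succ, Fin.tail,
      Bool.false_eq_true, if_true, if_false] <;> ring

theorem sum_crowdProb_mul_le_of_antitone {f : (Fin n → Bool) → ℝ} (hf : Antitone f)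
    {γ γ' : Fin n → ℝ} (h0 : 0 ≤ γ) (hle : γ ≤ γ') (h1 : γ' ≤ 1) :
    ∑ y, crowdProb n true γ' y * f y ≤ ∑ y, crowdProb n true γ y * f y := by
  induction n with
  | zero => simp [crowdProb]
  | succ n ih =>
    have tail_le {g g' : Fin (n + 1) → ℝ} (h : g ≤ g') : Fin.tail g ≤ Fin.tail g' :=
      fun i => h i.succ
    have antitone_cons (b : Bool) : Antitone fun y => f (Fin.cons b y) :=
      fun y y' hy => hf (Fin.cons_le_cons.mpr ⟨le_rfl, hy⟩)
    set A := ∑ y, crowdProb n true (Fin.tail γ) y * f (Fin.cons true y)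
    set B := ∑ y, crowdProb n true (Fin.tail γ) y * f (Fin.cons false y)
    have hA := ih (antitone_cons true) (tail_le h0) (tail_le hle) (tail_le h1)
    have hB := ih (antitone_cons false) (tail_le h0) (tail_le hle) (tail_le h1)
    have hAB : A ≤ B := sum_le_sum fun y _ =>
      mul_le_mul_of_nonneg_left (hf (Fin.cons_le_cons.mpr ⟨Bool.false_le _, le_rfl⟩))
        (crowdProb_nonneg (tail_le h0) ((tail_le hle).trans (tail_le h1)) y)
    have h0' : 0 ≤ γ 0 := h0 0
    have hle' : γ 0 ≤ γ' 0 := hle 0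
    have h1' : γ' 0 ≤ 1 := h1 0
    rw [sum_crowdProb_succ, sum_crowdProb_succ]
    calc _ ≤ γ' 0 * A + (1 - γ' 0) * B := by gcongr; linarith
      _ ≤ γ 0 * A + (1 - γ 0) * B := by nlinarith

end CrowdProb

section Majority

variable {n : ℕ}

-- The error of the majority rule when the truth is `true`.
noncomputable def majorityError (n : ℕ) (y : Fin n → Bool) : ℝ :=
  if (n : ℝ) / 2 < #{i | y i = false} then 1 else 0

lemma majorityError_antitone : Antitone (majorityError n) := by
  intro y y' hy
  have hcard : (#{i | y' i = false} : ℝ) ≤ #{i | y i = false} := by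
    exact_mod_cast card_le_card fun i => by
      simpa using fun h => Bool.eq_false_of_le_false (h ▸ hy i)
  unfold majorityError
  split_ifs <;> linarith

lemma card_true_add_card_false (y : Fin n → Bool) :
    #{i | y i = true} + #{i | y i = false} = n := by
  simpa using card_filter_add_card_filter_not (s := univ) fun i => y i = true

lemma majorityRule_eq_true_iff (y : Fin n → Bool) (u : Bool) :
    majorityRule n y u = true ↔ (n : ℝ) / 2 < #{i | y i = true} := by
  simp [majorityRule, sum_boole]

lemma crowdRisk_majorityRule (θ : Bool) (γ : Fin n → ℝ) :
    crowdRisk n (majorityRule n) θ γ =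
      ∑ y, crowdProb n θ γ y * if majorityRule n y true = θ then 0 else 1 :=
  sum_congr rfl fun y _ => by
    rw [Fintype.sum_bool, show majorityRule n y false = majorityRule n y true from rfl]; ring

lemma natCast_div_two_lt_iff (n a : ℕ) : (n : ℝ) / 2 < a ↔ n < 2 * a := by
  rw [div_lt_iff₀ two_pos]; norm_cast; rw [mul_comm]

-- For `θ = false` flip all votes; for `θ = true` use that `n` odd rules out ties.
lemma crowdRisk_majorityRule_eq (hn : Odd n) (θ : Bool) (γ : Fin n → ℝ) :
    crowdRisk n (majorityRule n) θ γ = ∑ y, crowdProb n true γ y * majorityError n y := by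
  rw [crowdRisk_majorityRule]
  cases θ with
  | false =>
    refine Fintype.sum_bijective (fun y i => !y i)
      (Function.Involutive.bijective fun y => by simp) _ _ fun y => ?_
    congr 1
    · exact prod_congr rfl fun i _ => by beta_reduce; cases y i <;> rfl
    · simp only [majorityError, Bool.not_eq_false', ← majorityRule_eq_true_iff y true]
      cases majorityRule n y true <;> rfl
  | true =>
    refine sum_congr rfl fun y _ => ?_
    have := card_true_add_card_false y
    simp only [majorityError, majorityRule_eq_true_iff, natCast_div_two_lt_iff]
    obtain ⟨m, rfl⟩ := hn
    split_ifs <;> first | rfl | omega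

lemma sum_apply_card_filter_eq_false (g : ℕ → ℝ) :
    ∑ y : Fin n → Bool, g #{i | y i = false} =
      ∑ k ∈ range (n + 1), (n.choose k : ℝ) * g k := by
  have hbij : Function.Bijective fun (s : Finset (Fin n)) i => decide (i ∉ s) :=
    Function.bijective_iff_has_inverse.mpr
      ⟨fun y => {i | y i = false}, fun s => by ext; simp, fun y => by funext i; simp⟩
  rw [← Fintype.sum_bijective _ hbij (fun s => g #s) _ fun s => by simp, ← powerset_univ,
    sum_powerset_apply_card, card_univ, Fintype.card_fin]
  simp [nsmul_eq_mul]

lemma sum_crowdProb_const_mul_majorityError (p : ℝ) :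
    ∑ y, crowdProb n true (fun _ => p) y * majorityError n y =
      ∑ k ∈ range (n + 1),
        if (n : ℝ) / 2 < k then (n.choose k : ℝ) * (1 - p) ^ k * p ^ (n - k) else 0 := by
  let g (k : ℕ) : ℝ := if (n : ℝ) / 2 < k then (1 - p) ^ k * p ^ (n - k) else 0
  calc ∑ y, crowdProb n true (fun _ => p) y * majorityError n y
      = ∑ y : Fin n → Bool, g #{i | y i = false} := sum_congr rfl fun y _ => by
        have hcard : #{i | y i = true} = n - #{i | y i = false} := by
          have := card_true_add_card_false y; omega
        rw [crowdProb_const, majorityError, hcard, Bool.not_true]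
        simp only [g]
        split_ifs <;> ring
    _ = ∑ k ∈ range (n + 1), (n.choose k : ℝ) * g k := sum_apply_card_filter_eq_false g
    _ = _ := sum_congr rfl fun k _ => by simp only [g, mul_ite, mul_zero, mul_assoc]

end Majority

section Bayes

variable {n : ℕ}

lemma crowdRisk_false_add_crowdRisk_true (δ : (Fin n → Bool) → Bool → Bool) (γ : Fin n → ℝ) :
    crowdRisk n δ false γ + crowdRisk n δ true γ =
      ∑ y, ∑ u, crowdProb n (!δ y u) γ y * (1 / 2) := by
  simp only [crowdRisk, ← sum_add_distrib]
  exact sum_congr rfl fun y _ => sum_congr rfl fun u _ => by cases δ y u <;> simp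

lemma crowdRisk_false_add_crowdRisk_true_le {δ₀ : (Fin n → Bool) → Bool → Bool} {γ : Fin n → ℝ}
    (hδ₀ : ∀ y u, crowdProb n (!δ₀ y u) γ y ≤ crowdProb n (δ₀ y u) γ y)
    (δ : (Fin n → Bool) → Bool → Bool) :
    crowdRisk n δ₀ false γ + crowdRisk n δ₀ true γ ≤
      crowdRisk n δ false γ + crowdRisk n δ true γ := by
  rw [crowdRisk_false_add_crowdRisk_true, crowdRisk_false_add_crowdRisk_true]
  gcongr with y _ u _
  rcases Bool.eq_or_eq_not (δ y u) (δ₀ y u) with h | h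
  · rw [h]
  · rw [h, Bool.not_not]; exact hδ₀ y u

lemma pow_mul_pow_le_pow_mul_pow {R : Type*} [CommSemiring R] [PartialOrder R] [IsOrderedRing R]
    {p q : R} (hq : 0 ≤ q) (hqp : q ≤ p) {a b : ℕ} (hab : a ≤ b) :
    p ^ a * q ^ b ≤ p ^ b * q ^ a := by
  obtain ⟨c, rfl⟩ := Nat.exists_eq_add_of_le hab
  calc p ^ a * q ^ (a + c) = p ^ a * q ^ a * q ^ c := by ring
    _ ≤ p ^ a * q ^ a * p ^ c := by
      gcongr; exact mul_nonneg (pow_nonneg (hq.trans hqp) a) (pow_nonneg hq a)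
    _ = p ^ (a + c) * q ^ a := by ring

lemma crowdProb_not_majorityRule_le {p : ℝ} (hp : 1 / 2 ≤ p) (hp1 : p ≤ 1)
    (y : Fin n → Bool) (u : Bool) :
    crowdProb n (!majorityRule n y u) (fun _ => p) y ≤
      crowdProb n (majorityRule n y u) (fun _ => p) y := by
  have hq : 0 ≤ 1 - p := by linarith
  have hqp : 1 - p ≤ p := by linarith
  have hcard := card_true_add_card_false y
  have hmaj := majorityRule_eq_true_iff y u
  rw [natCast_div_two_lt_iff] at hmaj
  cases hm : majorityRule n y u <;>
    simp only [hm, Bool.false_eq_true, false_iff, true_iff, not_lt] at hmaj <;>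
    simp only [Bool.not_false, Bool.not_true, crowdProb_const] <;>
    exact pow_mul_pow_le_pow_mul_pow hq hqp (by omega)

end Bayes

/-- on the restricted parameter space
`Θ* = {(θ,γ) : θ ∈ {0,1}, γᵢ ≥ 1/2 + ε for all i}` (with `ε ∈ (0,1/2)`, `n` odd,
accuracies being probabilities), the majority rule is minimax, and the minimax risk
equals `P(Bin(n, 1/2 − ε) > n/2)`. -/
theorem majority_minimax_restricted (n : ℕ) (hn : Odd n) (ε : ℝ) (hε0 : 0 < ε)
    (hε1 : ε < 1 / 2) :
    (⨆ θ : Bool, ⨆ γ : {g : Fin n → ℝ // ∀ i, 1 / 2 + ε ≤ g i ∧ g i ≤ 1},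
        crowdRisk n (majorityRule n) θ γ.1) =
      (⨅ δ : (Fin n → Bool) → Bool → Bool,
        ⨆ θ : Bool, ⨆ γ : {g : Fin n → ℝ // ∀ i, 1 / 2 + ε ≤ g i ∧ g i ≤ 1},
          crowdRisk n δ θ γ.1) ∧
    (⨆ θ : Bool, ⨆ γ : {g : Fin n → ℝ // ∀ i, 1 / 2 + ε ≤ g i ∧ g i ≤ 1},
        crowdRisk n (majorityRule n) θ γ.1) =
      ∑ k ∈ Finset.range (n + 1),
        if (n : ℝ) / 2 < (k : ℝ) then
          (n.choose k : ℝ) * (1 / 2 - ε) ^ k * (1 / 2 + ε) ^ (n - k)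
        else 0 := by
  have hp : 1 / 2 ≤ 1 / 2 + ε := by linarith
  have hp1 : 1 / 2 + ε ≤ 1 := by linarith
  set Γ := {g : Fin n → ℝ // ∀ i, 1 / 2 + ε ≤ g i ∧ g i ≤ 1}
  set tail := ∑ k ∈ Finset.range (n + 1), if (n : ℝ) / 2 < (k : ℝ) then
    (n.choose k : ℝ) * (1 / 2 - ε) ^ k * (1 / 2 + ε) ^ (n - k) else 0
  have hΓ (g : Fin n → ℝ) (hg : ∀ i, 1 / 2 + ε ≤ g i ∧ g i ≤ 1) : 0 ≤ g ∧ g ≤ 1 :=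
    ⟨fun i => (by linarith : (0 : ℝ) ≤ 1 / 2 + ε).trans (hg i).1, fun i => (hg i).2⟩
  let γ₀ : Γ := ⟨fun _ => 1 / 2 + ε, fun _ => ⟨le_rfl, hp1⟩⟩
  have risk_γ₀ (θ : Bool) : crowdRisk n (majorityRule n) θ γ₀.1 = tail := by
    rw [crowdRisk_majorityRule_eq hn, sum_crowdProb_const_mul_majorityError,
      show (1 : ℝ) - (1 / 2 + ε) = 1 / 2 - ε by ring]
  have risk_le (θ : Bool) (γ : Γ) : crowdRisk n (majorityRule n) θ γ.1 ≤ tail := by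
    rw [← risk_γ₀ θ, crowdRisk_majorityRule_eq hn, crowdRisk_majorityRule_eq hn]
    exact sum_crowdProb_mul_le_of_antitone majorityError_antitone (hΓ _ γ₀.2).1
      (fun i => (γ.2 i).1) (hΓ _ γ.2).2
  have sup_majority : (⨆ θ, ⨆ γ : Γ, crowdRisk n (majorityRule n) θ γ.1) = tail :=
    have : Nonempty Γ := ⟨γ₀⟩
    le_antisymm (ciSup_le fun θ => ciSup_le (risk_le θ))
      ((risk_γ₀ false).ge.trans (crowdRisk_le_iSup_iSup hΓ _ false γ₀))
  have tail_le_sup (δ) : tail ≤ ⨆ θ, ⨆ γ : Γ, crowdRisk n δ θ γ.1 := by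
    have := crowdRisk_false_add_crowdRisk_true_le (crowdProb_not_majorityRule_le hp hp1) δ
    rw [risk_γ₀, risk_γ₀] at this
    linarith [crowdRisk_le_iSup_iSup hΓ δ false γ₀, crowdRisk_le_iSup_iSup hΓ δ true γ₀]
  refine ⟨?_, sup_majority⟩
  rw [sup_majority]
  exact le_antisymm (le_ciInf tail_le_sup)
    (sup_majority ▸ ciInf_le ⟨tail, Set.forall_mem_range.2 tail_le_sup⟩ _)
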